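/- arXiv:2605.03054 — 6 statements merged into one kernel-verified Lean document; each statement's English description precedes it below -/
import Mathlib

section
/- For every natural number n ≥ 1, the central binomial coefficient satisfies the upper bound C(2n, n) ≤ 4^n / √(πn) as real numbers. -/
/-! With the Stirling sequence `s n = n! / (√(2n) (n/e)^n)`, the factorials cancel to give
`C(2n, n) = s (2n) / (s n)^2 * 4^n / √n`. Since `s` decreases to `√π` on positive integers,
`s (2n) ≤ s n` and `√π ≤ s n`, so `s (2n) / (s n)^2 ≤ 1 / s n ≤ 1 / √π`. -/

open Real Nat Stirling

lemma stirlingSeq_le_of_le {m n : ℕ} (hm : m ≠ 0) (hmn : m ≤ n) :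
    stirlingSeq n ≤ stirlingSeq m := by
  obtain ⟨m, rfl⟩ := exists_eq_succ_of_ne_zero hm
  obtain ⟨n, rfl⟩ := exists_eq_succ_of_ne_zero (by omega : n ≠ 0)
  exact stirlingSeq'_antitone (succ_le_succ_iff.mp hmn)

lemma cast_choose_two_mul_self_mul_factorial_sq (n : ℕ) :
    ((2 * n).choose n : ℝ) * n ! ^ 2 = (2 * n)! := by
  have := choose_mul_factorial_mul_factorial (le_mul_of_one_le_left' one_le_two : n ≤ 2 * n)
  rw [two_mul, Nat.add_sub_cancel] at this
  rw [two_mul, sq]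
  exact_mod_cast by rw [← this, mul_assoc]

lemma choose_two_mul_self_mul_stirlingSeq_sq {n : ℕ} (hn : n ≠ 0) :
    ((2 * n).choose n : ℝ) * (stirlingSeq n ^ 2 * √n) = stirlingSeq (2 * n) * 4 ^ n := by
  have hn' : (0 : ℝ) < n := by exact_mod_cast pos_of_ne_zero hn
  have hsqrt : √(2 * (2 * n : ℕ) : ℝ) = 2 * √n := by
    push_cast
    rw [show (2 : ℝ) * (2 * n) = 2 ^ 2 * n by ring, sqrt_mul (by norm_num), sqrt_sq zero_le_two]
  have hpow : (2 : ℝ) ^ (2 * n) = 4 ^ n := by rw [pow_mul]; norm_num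
  simp only [stirlingSeq, div_pow, mul_pow, hsqrt, sq_sqrt (by positivity : (0 : ℝ) ≤ 2 * n)]
  rw [← cast_choose_two_mul_self_mul_factorial_sq n]
  field_simp
  push_cast
  rw [sq_sqrt hn'.le, mul_pow, hpow]
  ring

/-- For every `n ≥ 1`, `C(2n, n) ≤ 4^n / √(π n)` as real numbers. -/
theorem central_binom_upper_bound (n : ℕ) (hn : 1 ≤ n) :
    (Nat.choose (2 * n) n : ℝ) ≤ 4 ^ n / Real.sqrt (Real.pi * n) := by
  have hn0 : n ≠ 0 := one_le_iff_ne_zero.mp hn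
  set s := stirlingSeq n
  have hπ : √π ≤ s := sqrt_pi_le_stirlingSeq hn0
  have hs : 0 < s := (sqrt_pos.mpr pi_pos).trans_le hπ
  have hrec : ((2 * n).choose n : ℝ) * (s * √n) * s ≤ 4 ^ n * s := calc
    _ = stirlingSeq (2 * n) * 4 ^ n := by
      rw [← choose_two_mul_self_mul_stirlingSeq_sq hn0]; ring
    _ ≤ s * 4 ^ n := by gcongr; exact stirlingSeq_le_of_le hn0 (by omega)
    _ = 4 ^ n * s := mul_comm _ _
  rw [sqrt_mul pi_pos.le, le_div_iff₀ (by positivity)]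
  calc ((2 * n).choose n : ℝ) * (√π * √n) ≤ (2 * n).choose n * (s * √n) := by gcongr
    _ ≤ 4 ^ n := le_of_mul_le_mul_right hrec hs
end

section
/- Let d be an odd natural number with d ≥ 1 and set d_e = (d+1)/2. Then, as real numbers, d · 2^{d−1} · C(d, d_e) ≤ √(d_e/(16π)) · 16^{d_e}. -/
open Real

lemma central_sq_bound (n : ℕ) :
    ((Nat.centralBinom n : ℝ))^2 * ((2*n+1)^2 * π) ≤ 16^n * (4*(n+1)) := by
  have h1 := Real.Wallis.le_W n
  have h2 := Real.Wallis.W_eq_factorial_ratio n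
  rw [h2] at h1
  have hf0 := Nat.choose_mul_factorial_mul_factorial (show n ≤ 2*n by omega)
  rw [show 2*n-n = n from by omega] at hf0
  have hfact : ((2*n).factorial : ℝ) = (Nat.centralBinom n : ℝ) * n.factorial * n.factorial := by
    rw [Nat.centralBinom]
    exact_mod_cast hf0.symm
  rw [hfact] at h1
  have hF : (0:ℝ) < (n.factorial : ℝ) := by positivity
  have hB : (0:ℝ) < (Nat.centralBinom n : ℝ) := by
    exact_mod_cast Nat.centralBinom_pos n
  have hn1 : (0:ℝ) < 2*(n:ℝ)+2 := by positivity
  have hn2 : (0:ℝ) < 2*(n:ℝ)+1 := by positivity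
  have hpi : (0:ℝ) < π := Real.pi_pos
  rw [div_mul_eq_mul_div, div_le_div_iff₀ hn1 (by positivity)] at h1
  have h16 : (2:ℝ)^(4*n) = 16^n := by
    rw [pow_mul]; norm_num
  rw [h16] at h1
  nlinarith [pow_pos hF 4, mul_pos (mul_pos hpi (pow_pos hB 2)) (pow_pos hF 4),
    sq_nonneg ((Nat.centralBinom n : ℝ)), pow_pos (mul_pos (mul_pos hB hF) hF) 2]

/-- For odd `d ≥ 1` and `d_e = (d+1)/2`,
    `d · 2^{d-1} · C(d, d_e) ≤ √(d_e/(16π)) · 16^{d_e}`. -/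
theorem rotated_count_upper_bound (d de : ℕ) (hd : Odd d) (hd1 : 1 ≤ d)
    (hde : de = (d + 1) / 2) :
    (d : ℝ) * 2 ^ (d - 1) * (Nat.choose d de : ℝ) ≤
      Real.sqrt ((de : ℝ) / (16 * Real.pi)) * 16 ^ de := by
  obtain ⟨k, rfl⟩ : ∃ k, d = 2*k+1 := by
    obtain ⟨k, hk⟩ := hd; exact ⟨k, by omega⟩
  have hde' : de = k + 1 := by omega
  subst hde'
  have hch : (Nat.choose (2*k+1) (k+1) : ℝ) = (Nat.centralBinom (k+1) : ℝ) / 2 := by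
    have : Nat.centralBinom (k+1) = 2 * Nat.choose (2*k+1) (k+1) := by
      rw [Nat.centralBinom]
      have h : 2*(k+1) = (2*k+1) + 1 := by omega
      rw [h, Nat.choose_succ_succ', Nat.choose_symm_half]
      omega
    rw [this]; push_cast; ring
  have hB := central_sq_bound (k+1)
  have hpi : (0:ℝ) < π := Real.pi_pos
  have hBpos : (0:ℝ) ≤ (Nat.centralBinom (k+1) : ℝ) := by positivity
  have hsub : 2*k+1-1 = 2*k := by omega
  rw [hsub, hch]
  have hrhs : Real.sqrt (((k:ℝ)+1) / (16 * π)) * 16 ^ (k+1)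
      = Real.sqrt ((((k:ℝ)+1) / (16 * π)) * (16 ^ (k+1))^2) := by
    rw [Real.sqrt_mul (by positivity), Real.sqrt_sq (by positivity)]
  push_cast
  rw [hrhs, Real.le_sqrt (by positivity) (by positivity)]
  have ht : (0:ℝ) < (16:ℝ)^k := by positivity
  rw [div_mul_eq_mul_div, le_div_iff₀ (by positivity)]
  push_cast at hB
  have h16 : (16:ℝ)^(k+1) = 16 * 16^k := by rw [pow_succ]; ring
  rw [h16] at hB ⊢
  have hs : ((2:ℝ)^(2*k))^2 = 16^k := by
    rw [← pow_mul, show 2*k*2 = 4*k by ring, pow_mul]; norm_num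
  set B := ((k+1).centralBinom : ℝ) with hBdef
  set t := (16:ℝ)^k with htdef
  have hgoal : ((2*(k:ℝ)+1) * 2^(2*k) * (B/2))^2 * (16*π)
      = 4*π*(2*(k:ℝ)+1)^2*B^2*t := by
    rw [show ((2*(k:ℝ)+1) * 2^(2*k) * (B/2))^2
        = (2*(k:ℝ)+1)^2 * ((2:ℝ)^(2*k))^2 * (B/2)^2 by ring, hs]
    ring
  have key := mul_le_mul_of_nonneg_right hB
    (show (0:ℝ) ≤ 4*(2*(k:ℝ)+1)^2*t by positivity)
  nlinarith [key, hgoal, mul_pos ht ht, sq_nonneg B, hpi.le, ht.le,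
    mul_nonneg (mul_pos ht ht).le (sq_nonneg (2*(k:ℝ)+1))]
end

section
/- Let S be a finite set with |S| = N, let F be a family of subsets of S, let d_e and k be natural numbers with d_e ≤ N. Suppose that every member A of F with |A| = d_e + k contains some member B of F with |B| = d_e. Then the number of members of F of cardinality d_e + k is at most C(N − d_e, k) times the number of members of F of cardinality d_e; moreover, as real numbers, it is at most (N^k / k!) times the number of members of F of cardinality d_e. -/
open Finset

/-- If every member of a family `F` of subsets of an `N`-element set `S` of cardinality
    `d_e + k` contains a member of `F` of cardinality `d_e`, then the number of members
    of cardinality `d_e + k` is at most `C(N - d_e, k)` times (and, as reals, at most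
    `N^k / k!` times) the number of members of cardinality `d_e`. -/
theorem config_count_bound {α : Type*} [DecidableEq α] (S : Finset α)
    (F : Finset (Finset α)) (hF : ∀ A ∈ F, A ⊆ S) (N de k : ℕ)
    (hN : S.card = N) (hdeN : de ≤ N)
    (hcontain : ∀ A ∈ F, A.card = de + k → ∃ B ∈ F, B ⊆ A ∧ B.card = de) :
    (F.filter fun A => A.card = de + k).card ≤
        Nat.choose (N - de) k * (F.filter fun A => A.card = de).card ∧
      ((F.filter fun A => A.card = de + k).card : ℝ) ≤
        ((N : ℝ) ^ k / (Nat.factorial k : ℝ)) *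
          ((F.filter fun A => A.card = de).card : ℝ) := by
  classical
  have key : (F.filter fun A => A.card = de + k) ⊆
      (F.filter fun A => A.card = de).biUnion
        (fun B => ((S \ B).powersetCard k).image (fun C => B ∪ C)) := by
    intro A hA
    rw [mem_filter] at hA
    obtain ⟨B, hBF, hBA, hBcard⟩ := hcontain A hA.1 hA.2
    refine mem_biUnion.2 ⟨B, mem_filter.2 ⟨hBF, hBcard⟩, mem_image.2 ⟨A \ B, ?_, ?_⟩⟩
    · refine mem_powersetCard.2 ⟨sdiff_subset_sdiff (hF A hA.1) le_rfl, ?_⟩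
      rw [card_sdiff_of_subset hBA, hA.2, hBcard]
      omega
    · exact union_sdiff_of_subset hBA
  have h1 : (F.filter fun A => A.card = de + k).card ≤
      Nat.choose (N - de) k * (F.filter fun A => A.card = de).card := by
    calc (F.filter fun A => A.card = de + k).card
        ≤ ((F.filter fun A => A.card = de).biUnion
            (fun B => ((S \ B).powersetCard k).image (fun C => B ∪ C))).card :=
          card_le_card key
      _ ≤ ∑ B ∈ F.filter (fun A => A.card = de),
            (((S \ B).powersetCard k).image (fun C => B ∪ C)).card := card_biUnion_le
      _ ≤ ∑ _B ∈ F.filter (fun A => A.card = de), Nat.choose (N - de) k := by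
          refine sum_le_sum fun B hB => ?_
          rw [mem_filter] at hB
          calc (((S \ B).powersetCard k).image (fun C => B ∪ C)).card
              ≤ ((S \ B).powersetCard k).card := card_image_le
            _ = Nat.choose (N - de) k := by
                rw [card_powersetCard, card_sdiff_of_subset (hF B hB.1), hN, hB.2]
      _ = Nat.choose (N - de) k * (F.filter fun A => A.card = de).card := by
          rw [sum_const, smul_eq_mul, mul_comm]
  refine ⟨h1, ?_⟩
  have h2 : (Nat.choose (N - de) k : ℝ) ≤ (N : ℝ) ^ k / (Nat.factorial k : ℝ) := by
    rw [le_div_iff₀ (by positivity)]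
    have : Nat.choose (N - de) k * Nat.factorial k ≤ N ^ k := by
      calc Nat.choose (N - de) k * Nat.factorial k
          = (N - de).descFactorial k := by
            rw [Nat.descFactorial_eq_factorial_mul_choose, mul_comm]
        _ ≤ (N - de) ^ k := Nat.descFactorial_le_pow _ _
        _ ≤ N ^ k := Nat.pow_le_pow_left (Nat.sub_le _ _) _
    exact_mod_cast this
  calc ((F.filter fun A => A.card = de + k).card : ℝ)
      ≤ (Nat.choose (N - de) k : ℝ) * ((F.filter fun A => A.card = de).card : ℝ) := by
        exact_mod_cast h1
    _ ≤ ((N : ℝ) ^ k / (Nat.factorial k : ℝ)) * ((F.filter fun A => A.card = de).card : ℝ) :=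
        mul_le_mul_of_nonneg_right h2 (by positivity)
end

section
/- Let N, d_e, k be natural numbers with d_e ≤ N, let p be a real number with 0 < p < 1 and N·p ≤ d_e, and let C : ℕ → ℕ satisfy C(d_e + k) ≤ binom(N − d_e, k) · C(d_e). Define P(j) = C(j) · p^j · (1 − p)^{N − j}. Then P(d_e + k) ≤ ((N·p)^k / k!) · P(d_e). -/
/-- If `C(d_e + k) ≤ binom(N - d_e, k) · C(d_e)`, `0 < p < 1` and `N·p ≤ d_e`, then
    `P(d_e + k) ≤ ((N·p)^k / k!) · P(d_e)` where `P(j) = C(j) p^j (1-p)^{N-j}`. -/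
theorem weight_prob_bound (N de k : ℕ) (hdeN : de ≤ N) (p : ℝ)
    (hp0 : 0 < p) (hp1 : p < 1) (hNp : (N : ℝ) * p ≤ (de : ℝ))
    (C : ℕ → ℕ) (hC : C (de + k) ≤ Nat.choose (N - de) k * C de) :
    (C (de + k) : ℝ) * p ^ (de + k) * (1 - p) ^ (N - (de + k)) ≤
      (((N : ℝ) * p) ^ k / (Nat.factorial k : ℝ)) *
        ((C de : ℝ) * p ^ de * (1 - p) ^ (N - de)) := by
  have h1p : (0:ℝ) < 1 - p := by linarith
  by_cases hk : k ≤ N - de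
  · -- main case
    have hdk : de + k ≤ N := by omega
    have hsub : N - de = (N - (de + k)) + k := by omega
    -- bound on the binomial coefficient
    have hfac : (0:ℝ) < (Nat.factorial k : ℝ) := by
      exact_mod_cast Nat.factorial_pos k
    have hdesc : (Nat.choose (N - de) k : ℝ) * (Nat.factorial k : ℝ)
        ≤ ((N - de : ℕ) : ℝ) ^ k := by
      have := Nat.descFactorial_le_pow (N - de) k
      have h2 := Nat.descFactorial_eq_factorial_mul_choose (N - de) k
      have : Nat.choose (N - de) k * Nat.factorial k ≤ (N - de) ^ k := by
        calc Nat.choose (N - de) k * Nat.factorial k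
            = Nat.descFactorial (N - de) k := by rw [h2]; ring
          _ ≤ (N - de) ^ k := Nat.descFactorial_le_pow _ _
      exact_mod_cast this
    have hNd : ((N - de : ℕ) : ℝ) ≤ (N : ℝ) * (1 - p) := by
      rw [Nat.cast_sub hdeN]; nlinarith
    have hNd0 : (0:ℝ) ≤ ((N - de : ℕ) : ℝ) := Nat.cast_nonneg _
    have hpowk : ((N - de : ℕ) : ℝ) ^ k ≤ ((N : ℝ) * (1 - p)) ^ k :=
      pow_le_pow_left₀ hNd0 hNd k
    have hchoose : (Nat.choose (N - de) k : ℝ)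
        ≤ ((N : ℝ) * (1 - p)) ^ k / (Nat.factorial k : ℝ) := by
      rw [le_div_iff₀ hfac]
      exact hdesc.trans hpowk
    have hCle : (C (de + k) : ℝ) ≤ (Nat.choose (N - de) k : ℝ) * (C de : ℝ) := by
      exact_mod_cast hC
    have hppos : (0:ℝ) < p ^ (de + k) := pow_pos hp0 _
    have hqpos : (0:ℝ) < (1 - p) ^ (N - (de + k)) := pow_pos h1p _
    calc (C (de + k) : ℝ) * p ^ (de + k) * (1 - p) ^ (N - (de + k))
        ≤ ((Nat.choose (N - de) k : ℝ) * (C de : ℝ)) * p ^ (de + k) *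
            (1 - p) ^ (N - (de + k)) := by
          apply mul_le_mul_of_nonneg_right _ hqpos.le
          exact mul_le_mul_of_nonneg_right hCle hppos.le
      _ ≤ (((N : ℝ) * (1 - p)) ^ k / (Nat.factorial k : ℝ) * (C de : ℝ)) *
            p ^ (de + k) * (1 - p) ^ (N - (de + k)) := by
          apply mul_le_mul_of_nonneg_right _ hqpos.le
          apply mul_le_mul_of_nonneg_right _ hppos.le
          exact mul_le_mul_of_nonneg_right hchoose (Nat.cast_nonneg _)
      _ = (((N : ℝ) * p) ^ k / (Nat.factorial k : ℝ)) *
            ((C de : ℝ) * p ^ de * (1 - p) ^ (N - de)) := by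
          rw [hsub, pow_add, pow_add, mul_pow, mul_pow]
          field_simp
  · -- choose = 0, so C (de + k) = 0
    have hch0 : Nat.choose (N - de) k = 0 := Nat.choose_eq_zero_of_lt (by omega)
    have hC0 : C (de + k) = 0 := by rw [hch0] at hC; omega
    rw [hC0]
    simp only [Nat.cast_zero, zero_mul]
    positivity
end

section
/- Let N, d_e be natural numbers with d_e ≤ N, let p be a real number with 0 < p < 1 and N·p ≤ d_e, and let C : ℕ → ℕ satisfy C(j) = 0 for all j < d_e and C(d_e + k) ≤ binom(N − d_e, k) · C(d_e) for all k ≤ N − d_e. Then the total logical error rate L = Σ_{j=0}^{N} C(j) · p^j · (1 − p)^{N − j} satisfies L ≤ e^{N·p} · C(d_e) · p^{d_e} · (1 − p)^{N − d_e}. -/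
open Finset Real

/-!
Write `M = N - d_e`. Since `C` vanishes below `d_e` and `C (d_e + k) ≤ binom(M, k) C(d_e)`, the sum
is dominated by `C(d_e) p^{d_e}` times the total mass of the binomial distribution `Bin(M, p)`,
which is `1`. It remains to see that `1 ≤ e^{N p} (1 - p)^M`: from `(1 - p)⁻¹ ≤ e^{p / (1 - p)}` we
get `(1 - p)^{-M} ≤ e^{M p / (1 - p)}`, and `N p ≤ d_e` says exactly that `M ≤ N (1 - p)`.
-/

theorem sum_range_choose_mul_pow_mul_one_sub_pow (p : ℝ) (M : ℕ) :
    ∑ k ∈ range (M + 1), (M.choose k : ℝ) * p ^ k * (1 - p) ^ (M - k) = 1 := by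
  calc ∑ k ∈ range (M + 1), (M.choose k : ℝ) * p ^ k * (1 - p) ^ (M - k)
      = (p + (1 - p)) ^ M := by rw [add_pow]; exact sum_congr rfl fun k _ => by ring
    _ = 1 := by rw [add_sub_cancel, one_pow]

theorem one_le_exp_mul_one_sub_pow {p : ℝ} (hp : p < 1) (M : ℕ) :
    1 ≤ exp (M * p / (1 - p)) * (1 - p) ^ M := by
  have h1p : 0 < 1 - p := sub_pos.mpr hp
  have hinv : (1 - p)⁻¹ ≤ exp (p / (1 - p)) := by
    calc (1 - p)⁻¹ = p / (1 - p) + 1 := by field_simp; ring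
      _ ≤ exp (p / (1 - p)) := add_one_le_exp _
  calc (1 : ℝ) = ((1 - p)⁻¹) ^ M * (1 - p) ^ M := by
        rw [← mul_pow, inv_mul_cancel₀ h1p.ne', one_pow]
    _ ≤ exp (p / (1 - p)) ^ M * (1 - p) ^ M := by gcongr
    _ = exp (M * p / (1 - p)) * (1 - p) ^ M := by rw [← exp_nat_mul, mul_div_assoc]

theorem sum_mul_pow_mul_one_sub_pow_le {N de : ℕ} (hdeN : de ≤ N) {p : ℝ} (hp0 : 0 ≤ p)
    (hp1 : p ≤ 1) {C : ℕ → ℕ} (hC0 : ∀ j < de, C j = 0)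
    (hC : ∀ k ≤ N - de, C (de + k) ≤ (N - de).choose k * C de) :
    ∑ j ∈ range (N + 1), (C j : ℝ) * p ^ j * (1 - p) ^ (N - j) ≤ C de * p ^ de := by
  set M := N - de
  calc ∑ j ∈ range (N + 1), (C j : ℝ) * p ^ j * (1 - p) ^ (N - j)
      = ∑ k ∈ range (M + 1), (C (de + k) : ℝ) * p ^ (de + k) * (1 - p) ^ (M - k) := by
        rw [show N + 1 = de + (M + 1) by omega, sum_range_add,
          sum_eq_zero fun j hj => by simp [hC0 j (mem_range.mp hj)], zero_add]
        exact sum_congr rfl fun k _ => by congr 2; omega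
    _ ≤ ∑ k ∈ range (M + 1), C de * p ^ de * ((M.choose k : ℝ) * p ^ k * (1 - p) ^ (M - k)) := by
        refine sum_le_sum fun k hk => ?_
        have hCk : (C (de + k) : ℝ) ≤ M.choose k * C de := by
          exact_mod_cast hC k (Nat.lt_succ_iff.mp (mem_range.mp hk))
        calc (C (de + k) : ℝ) * p ^ (de + k) * (1 - p) ^ (M - k)
            ≤ M.choose k * C de * p ^ (de + k) * (1 - p) ^ (M - k) := by gcongr
          _ = _ := by ring
    _ = C de * p ^ de := by rw [← mul_sum, sum_range_choose_mul_pow_mul_one_sub_pow, mul_one]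

/-- Under the paper's counting hypotheses, the total logical error rate
    `L = Σ_{j=0}^{N} C(j) p^j (1-p)^{N-j}` is at most
    `e^{N·p} · C(d_e) · p^{d_e} · (1-p)^{N-d_e}`. -/
theorem logical_error_rate_bound (N de : ℕ) (hdeN : de ≤ N) (p : ℝ)
    (hp0 : 0 < p) (hp1 : p < 1) (hNp : (N : ℝ) * p ≤ (de : ℝ))
    (C : ℕ → ℕ) (hC0 : ∀ j < de, C j = 0)
    (hC : ∀ k ≤ N - de, C (de + k) ≤ Nat.choose (N - de) k * C de) :
    ∑ j ∈ Finset.range (N + 1), (C j : ℝ) * p ^ j * (1 - p) ^ (N - j) ≤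
      Real.exp ((N : ℝ) * p) * (C de : ℝ) * p ^ de * (1 - p) ^ (N - de) := by
  have h1p : 0 < 1 - p := sub_pos.mpr hp1
  have hM : ((N - de : ℕ) : ℝ) * p / (1 - p) ≤ N * p := by
    rw [div_le_iff₀ h1p, Nat.cast_sub hdeN]
    nlinarith
  have hexp : 1 ≤ exp (N * p) * (1 - p) ^ (N - de) :=
    (one_le_exp_mul_one_sub_pow hp1 _).trans (by gcongr)
  calc ∑ j ∈ range (N + 1), (C j : ℝ) * p ^ j * (1 - p) ^ (N - j)
      ≤ C de * p ^ de := sum_mul_pow_mul_one_sub_pow_le hdeN hp0.le hp1.le hC0 hC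
    _ ≤ C de * p ^ de * (exp (N * p) * (1 - p) ^ (N - de)) :=
        le_mul_of_one_le_right (by positivity) hexp
    _ = exp (N * p) * C de * p ^ de * (1 - p) ^ (N - de) := by ring
end

section
/- Let M be an odd natural number with M ≥ 1, set M_e = (M+1)/2, let p_m be a real number with 0 ≤ p_m ≤ 1 and let N_a be a natural number. Define p_M = Σ_{k=M_e}^{M} C(M, k) · p_m^k · (1 − p_m)^{M − k} and L_M = 1 − (1 − p_M)^{N_a}. Then, as real numbers, L_M ≤ N_a · (4·p_m)^{M_e} / (2·√(π·M_e)). -/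
open Finset Real

lemma sqrtpi_le_stirlingSeq {n : ℕ} (hn : 1 ≤ n) : Real.sqrt Real.pi ≤ Stirling.stirlingSeq n := by
  obtain ⟨k, rfl⟩ : ∃ k, n = k + 1 := ⟨n - 1, by omega⟩
  exact Stirling.stirlingSeq'_antitone.le_of_tendsto
    (Stirling.tendsto_stirlingSeq_sqrt_pi.comp (Filter.tendsto_add_atTop_nat 1)) k

lemma stirlingSeq_anti {i j : ℕ} (hi : 1 ≤ i) (hij : i ≤ j) :
    Stirling.stirlingSeq j ≤ Stirling.stirlingSeq i := by
  obtain ⟨a, rfl⟩ : ∃ a, i = a + 1 := ⟨i - 1, by omega⟩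
  obtain ⟨b, rfl⟩ : ∃ b, j = b + 1 := ⟨j - 1, by omega⟩
  exact Stirling.stirlingSeq'_antitone (by omega)

lemma centralBinom_le_real (n : ℕ) (hn : 1 ≤ n) :
    (Nat.centralBinom n : ℝ) ≤ 4 ^ n / Real.sqrt (Real.pi * n) := by
  set a := Stirling.stirlingSeq n with ha
  set b := Stirling.stirlingSeq (2 * n) with hb
  have hpi : (0:ℝ) < Real.pi := Real.pi_pos
  have hn0 : (0:ℝ) < (n:ℝ) := by exact_mod_cast hn
  have hsp : Real.sqrt Real.pi ≤ a := sqrtpi_le_stirlingSeq hn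
  have hba : b ≤ a := stirlingSeq_anti hn (by omega)
  have hspp : (0:ℝ) < Real.sqrt Real.pi := Real.sqrt_pos.2 hpi
  have ha0 : 0 < a := lt_of_lt_of_le hspp hsp
  have hb0 : 0 < b := lt_of_lt_of_le hspp (sqrtpi_le_stirlingSeq (by omega))
  set E : ℝ := ((n:ℝ) / Real.exp 1) ^ n with hE
  have hE0 : 0 < E := by positivity
  have hsn : (0:ℝ) < Real.sqrt n := Real.sqrt_pos.2 hn0
  -- factorial formulas
  have hfn : (Nat.factorial n : ℝ) = a * (Real.sqrt (2 * n) * E) := by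
    rw [ha, Stirling.stirlingSeq, hE]
    field_simp
  have hf2n : (Nat.factorial (2 * n) : ℝ) = b * (Real.sqrt (2 * (2 * n)) * ((2 * (n:ℝ)) / Real.exp 1) ^ (2 * n)) := by
    rw [hb, Stirling.stirlingSeq]
    push_cast
    field_simp
  have hC : (Nat.centralBinom n : ℝ) * ((Nat.factorial n : ℝ) * (Nat.factorial n : ℝ)) = (Nat.factorial (2 * n) : ℝ) := by
    rw [Nat.centralBinom]
    have h := Nat.choose_mul_factorial_mul_factorial (show n ≤ 2 * n by omega)
    have h2 : 2 * n - n = n := by omega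
    rw [h2] at h
    push_cast [← h]
    ring
  -- simplify the big factorial pieces
  have hsq1 : Real.sqrt (2 * (n:ℝ)) * Real.sqrt (2 * (n:ℝ)) = 2 * n :=
    Real.mul_self_sqrt (by positivity)
  have hsq2 : Real.sqrt (2 * (2 * (n:ℝ))) = 2 * Real.sqrt n := by
    rw [show (2 : ℝ) * (2 * n) = 4 * n by ring, Real.sqrt_mul (by norm_num),
      show (4:ℝ) = 2 ^ 2 by norm_num, Real.sqrt_sq (by norm_num)]
  have hpow : ((2 * (n:ℝ)) / Real.exp 1) ^ (2 * n) = 4 ^ n * E ^ 2 := by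
    rw [hE, ← pow_mul, show n * 2 = 2 * n from by ring, mul_div_assoc, mul_pow, pow_mul,
      show ((2:ℝ)^2 = 4) from by norm_num]
  have key0 : (Nat.centralBinom n : ℝ) * (a^2 * (2 * n) * E^2) = b * (2 * Real.sqrt n * (4 ^ n * E ^ 2)) := by
    have := hC
    rw [hfn, hf2n, hsq2, hpow] at this
    linear_combination this - ((Nat.centralBinom n : ℝ) * a^2 * E^2) * hsq1
  have key : (Nat.centralBinom n : ℝ) * Real.sqrt n * a ^ 2 = b * 4 ^ n := by
    have hns : (n:ℝ) = Real.sqrt n * Real.sqrt n := (Real.mul_self_sqrt hn0.le).symm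
    have h2 : ((Nat.centralBinom n : ℝ) * Real.sqrt n * a ^ 2) * (2 * Real.sqrt n * E ^ 2)
        = (b * 4 ^ n) * (2 * Real.sqrt n * E ^ 2) := by
      linear_combination key0 - 2*(Nat.centralBinom n : ℝ)*a^2*E^2*hns
    exact mul_right_cancel₀ (by positivity) h2
  rw [le_div_iff₀ (Real.sqrt_pos.2 (by positivity))]
  rw [Real.sqrt_mul hpi.le]
  have hfin : (Nat.centralBinom n : ℝ) * (Real.sqrt Real.pi * Real.sqrt n) * a ^ 2
      ≤ 4 ^ n * a ^ 2 := by
    have h1 : Real.sqrt Real.pi * b ≤ a * a :=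
      mul_le_mul hsp hba hb0.le ha0.le
    calc (Nat.centralBinom n : ℝ) * (Real.sqrt Real.pi * Real.sqrt n) * a ^ 2
        = Real.sqrt Real.pi * ((Nat.centralBinom n : ℝ) * Real.sqrt n * a ^ 2) := by ring
      _ = Real.sqrt Real.pi * (b * 4 ^ n) := by rw [key]
      _ = (Real.sqrt Real.pi * b) * 4 ^ n := by ring
      _ ≤ (a * a) * 4 ^ n := mul_le_mul_of_nonneg_right h1 (by positivity)
      _ = 4 ^ n * a ^ 2 := by ring
  exact le_of_mul_le_mul_right hfin (by positivity : (0:ℝ) < a ^ 2)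


/-- For odd `M ≥ 1`, `M_e = (M+1)/2`, per-measurement error probability `p_m` and `N_a`
    ancilla qubits, `L_M = 1 - (1 - p_M)^{N_a}` satisfies
    `L_M ≤ N_a · (4 p_m)^{M_e} / (2 √(π M_e))`. -/
theorem measurement_error_stirling_bound (M Me Na : ℕ) (hM : Odd M) (hM1 : 1 ≤ M)
    (hMe : Me = (M + 1) / 2) (pm : ℝ) (hpm0 : 0 ≤ pm) (hpm1 : pm ≤ 1) :
    1 - (1 - ∑ k ∈ Finset.Icc Me M,
          (Nat.choose M k : ℝ) * pm ^ k * (1 - pm) ^ (M - k)) ^ Na ≤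
      (Na : ℝ) * (4 * pm) ^ Me / (2 * Real.sqrt (Real.pi * (Me : ℝ))) := by
  obtain ⟨m, hm⟩ := hM
  subst hm
  have hMe' : Me = m + 1 := by omega
  subst hMe'
  clear hMe hM1
  set S : ℝ := ∑ k ∈ Finset.Icc (m+1) (2*m+1),
      (Nat.choose (2*m+1) k : ℝ) * pm ^ k * (1 - pm) ^ (2*m+1 - k) with hS
  have hq0 : (0:ℝ) ≤ 1 - pm := by linarith
  have hS0 : 0 ≤ S := Finset.sum_nonneg fun k _ => by positivity
  have hS1 : S ≤ 1 := by
    calc S ≤ ∑ k ∈ Finset.range (2*m+1+1),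
        (Nat.choose (2*m+1) k : ℝ) * pm ^ k * (1 - pm) ^ (2*m+1 - k) := by
          apply Finset.sum_le_sum_of_subset_of_nonneg
          · intro k hk
            simp only [Finset.mem_Icc] at hk
            simp only [Finset.mem_range]; omega
          · intro k _ _; positivity
      _ = (pm + (1 - pm)) ^ (2*m+1) := by
          rw [add_pow]
          exact Finset.sum_congr rfl fun k _ => by ring
      _ = 1 := by norm_num
  -- Bernoulli
  have bern : 1 - (1 - S) ^ Na ≤ (Na : ℝ) * S := by
    have h := one_add_mul_le_pow (show (-2:ℝ) ≤ -S by linarith) Na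
    rw [show (1:ℝ) + -S = 1 - S from by ring] at h
    nlinarith [h]
  -- choose bound
  have hmid : ∀ k, Nat.choose (2*m+1) k ≤ Nat.choose (2*m+1) (m+1) := by
    intro k
    have h1 := Nat.choose_le_middle k (2*m+1)
    have h2 : (2*m+1)/2 = m := by omega
    rw [h2] at h1
    have h3 : Nat.choose (2*m+1) ((2*m+1) - (m+1)) = Nat.choose (2*m+1) (m+1) :=
      Nat.choose_symm (by omega)
    have h4 : (2*m+1) - (m+1) = m := by omega
    rw [h4] at h3
    omega
  have hDbound : S ≤ (Nat.choose (2*m+1) (m+1) : ℝ) * pm ^ (m+1) := by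
    have step1 : S ≤ ∑ k ∈ Finset.Icc (m+1) (2*m+1),
        (Nat.choose (2*m+1) (m+1) : ℝ) * ((Nat.choose m (k - (m+1)) : ℝ)
          * pm ^ k * (1 - pm) ^ (2*m+1 - k)) := by
      apply Finset.sum_le_sum
      intro k hk
      simp only [Finset.mem_Icc] at hk
      have hc1 : (Nat.choose (2*m+1) k : ℝ) ≤ (Nat.choose (2*m+1) (m+1) : ℝ) := by
        exact_mod_cast hmid k
      have hc2 : (1:ℝ) ≤ (Nat.choose m (k - (m+1)) : ℝ) := by
        have : 0 < Nat.choose m (k - (m+1)) := Nat.choose_pos (by omega)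
        exact_mod_cast this
      have hnn : (0:ℝ) ≤ pm ^ k * (1 - pm) ^ (2*m+1 - k) := by positivity
      calc (Nat.choose (2*m+1) k : ℝ) * pm ^ k * (1 - pm) ^ (2*m+1 - k)
          = (Nat.choose (2*m+1) k : ℝ) * (pm ^ k * (1 - pm) ^ (2*m+1 - k)) := by ring
        _ ≤ ((Nat.choose (2*m+1) (m+1) : ℝ) * (Nat.choose m (k - (m+1)) : ℝ))
              * (pm ^ k * (1 - pm) ^ (2*m+1 - k)) := by
            apply mul_le_mul_of_nonneg_right _ hnn
            calc (Nat.choose (2*m+1) k : ℝ) ≤ (Nat.choose (2*m+1) (m+1) : ℝ) := hc1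
              _ = (Nat.choose (2*m+1) (m+1) : ℝ) * 1 := by ring
              _ ≤ _ := by
                  apply mul_le_mul_of_nonneg_left hc2 (by positivity)
        _ = (Nat.choose (2*m+1) (m+1) : ℝ) * ((Nat.choose m (k - (m+1)) : ℝ)
              * pm ^ k * (1 - pm) ^ (2*m+1 - k)) := by ring
    have step2 : ∑ k ∈ Finset.Icc (m+1) (2*m+1),
        (Nat.choose (2*m+1) (m+1) : ℝ) * ((Nat.choose m (k - (m+1)) : ℝ)
          * pm ^ k * (1 - pm) ^ (2*m+1 - k))
        = (Nat.choose (2*m+1) (m+1) : ℝ) * pm ^ (m+1) *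
          ∑ i ∈ Finset.range (m+1), (Nat.choose m i : ℝ) * pm ^ i * (1 - pm) ^ (m - i) := by
      rw [← Finset.Ico_add_one_right_eq_Icc, Finset.sum_Ico_eq_sum_range]
      have hlen : 2*m+1+1 - (m+1) = m+1 := by omega
      rw [hlen, Finset.mul_sum]
      apply Finset.sum_congr rfl
      intro i hi
      simp only [Finset.mem_range] at hi
      have e1 : m + 1 + i - (m + 1) = i := by omega
      have e2 : 2*m+1 - (m+1+i) = m - i := by omega
      rw [e1, e2, pow_add]
      ring
    have step3 : ∑ i ∈ Finset.range (m+1), (Nat.choose m i : ℝ) * pm ^ i * (1 - pm) ^ (m - i)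
        = 1 := by
      have : ∑ i ∈ Finset.range (m+1), (Nat.choose m i : ℝ) * pm ^ i * (1 - pm) ^ (m - i)
          = (pm + (1 - pm)) ^ m := by
        rw [add_pow]
        exact Finset.sum_congr rfl fun k _ => by ring
      rw [this]; norm_num
    calc S ≤ _ := step1
      _ = _ := step2
      _ = (Nat.choose (2*m+1) (m+1) : ℝ) * pm ^ (m+1) := by rw [step3]; ring
  -- central binomial
  have hhalf : (Nat.centralBinom (m+1) : ℕ) = 2 * Nat.choose (2*m+1) (m+1) := by
    rw [Nat.centralBinom]
    have h1 : 2 * (m+1) = (2*m+1) + 1 := by omega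
    rw [h1, Nat.choose_succ_succ']
    have h3 : Nat.choose (2*m+1) ((2*m+1) - (m+1)) = Nat.choose (2*m+1) (m+1) :=
      Nat.choose_symm (by omega)
    have h4 : (2*m+1) - (m+1) = m := by omega
    rw [h4] at h3
    omega
  have cb := centralBinom_le_real (m+1) (by omega)
  have hsqpos : (0:ℝ) < Real.sqrt (Real.pi * (m+1)) := by
    apply Real.sqrt_pos.2; positivity
  have hCle : (Nat.choose (2*m+1) (m+1) : ℝ) ≤ 4 ^ (m+1) / (2 * Real.sqrt (Real.pi * (m+1))) := by
    have h1 : (Nat.choose (2*m+1) (m+1) : ℝ) = (Nat.centralBinom (m+1) : ℝ) / 2 := by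
      have := hhalf
      push_cast [this]
      ring
    rw [h1, div_le_div_iff₀ (by norm_num) (by positivity)]
    calc (Nat.centralBinom (m+1) : ℝ) * (2 * Real.sqrt (Real.pi * (m+1)))
        ≤ (4 ^ (m+1) / Real.sqrt (Real.pi * (m+1))) * (2 * Real.sqrt (Real.pi * (m+1))) := by
          apply mul_le_mul_of_nonneg_right _ (by positivity)
          exact_mod_cast cb
      _ = 4 ^ (m+1) * 2 := by field_simp
  -- final chain
  have hcast : ((m:ℝ) + 1) = ((m+1 : ℕ) : ℝ) := by push_cast; ring
  calc 1 - (1 - S) ^ Na ≤ (Na : ℝ) * S := bern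
    _ ≤ (Na : ℝ) * ((Nat.choose (2*m+1) (m+1) : ℝ) * pm ^ (m+1)) :=
        mul_le_mul_of_nonneg_left hDbound (Nat.cast_nonneg Na)
    _ ≤ (Na : ℝ) * ((4 ^ (m+1) / (2 * Real.sqrt (Real.pi * (m+1)))) * pm ^ (m+1)) := by
        apply mul_le_mul_of_nonneg_left _ (Nat.cast_nonneg Na)
        exact mul_le_mul_of_nonneg_right hCle (by positivity)
    _ = (Na : ℝ) * (4 * pm) ^ (m+1) / (2 * Real.sqrt (Real.pi * ((m+1:ℕ) : ℝ))) := by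
        rw [mul_pow]
        push_cast
        ring
end
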